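/- Let P ∈ ℝ^{n×n} be symmetric positive definite and suppose a differentiable curve ζ: [t_*, t₀+T) → ℝ^n satisfies d/dt (ζ(t)ᵀ P ζ(t)) ≤ −ε₁ μ^{1+m}(t) ‖ζ(t)‖² with ε₁ > 0, m ≥ 1, μ(t) = T/(T+t₀−t). Then ‖ζ(t)‖ ≤ sqrt(λ_max(P)/λ_min(P)) ‖ζ(t_*)‖ exp(−(ε₁ T/(2 m λ_max(P))) (μ^m(t) − μ^m(t_*))) for all t ∈ [t_*, t₀+T), and consequently ζ(t) → 0 as t → t₀ + T. -/

import Mathlib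

/-!
Put `V t = ⟪ζ t, P ζ t⟫`. Since `V ≤ λ_max ‖ζ‖²`, the hypothesis gives
`V' ≤ -(ε₁ / λ_max) μ^(1+m) V`, and as `(T / m) (μ^m)' = μ^(1+m)`, the integrating factor
`exp (ε₁ T μ^m / (m λ_max))` makes `V` times it nonincreasing. Comparing `V` with `λ_min ‖ζ‖²` at
time `t` and with `λ_max ‖ζ‖²` at time `t_*`, then taking square roots, gives the estimate; the
limit follows because `μ t → ∞` as `t → t₀ + T`.
-/

open Set Filter Matrix
open scoped InnerProductSpace Topology

theorem le_mul_exp_sub_of_hasDerivAt {V V' g g' : ℝ → ℝ} {a b : ℝ}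
    (hV : ∀ t ∈ Ico a b, HasDerivAt V (V' t) t) (hg : ∀ t ∈ Ico a b, HasDerivAt g (g' t) t)
    (hle : ∀ t ∈ Ico a b, V' t + g' t * V t ≤ 0) {t : ℝ} (ht : t ∈ Ico a b) :
    V t ≤ V a * Real.exp (g a - g t) := by
  have hF : ∀ s ∈ Ico a b, HasDerivAt (fun s => V s * Real.exp (g s))
      ((V' s + g' s * V s) * Real.exp (g s)) s := fun s hs =>
    ((hV s hs).mul (hg s hs).exp).congr_deriv (by ring)
  have hanti : AntitoneOn (fun s => V s * Real.exp (g s)) (Ico a b) := by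
    refine antitoneOn_of_hasDerivWithinAt_nonpos (convex_Ico a b)
      (f' := fun s => (V' s + g' s * V s) * Real.exp (g s))
      (fun s hs => (hF s hs).continuousAt.continuousWithinAt) (fun s hs => ?_) (fun s hs => ?_)
    all_goals rw [interior_Ico] at hs
    · exact (hF s (Ioo_subset_Ico_self hs)).hasDerivWithinAt
    · exact mul_nonpos_of_nonpos_of_nonneg (hle s (Ioo_subset_Ico_self hs)) (Real.exp_nonneg _)
  calc V t = V t * Real.exp (g t) * Real.exp (-g t) := by
        rw [mul_assoc, ← Real.exp_add, add_neg_cancel, Real.exp_zero, mul_one]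
    _ ≤ V a * Real.exp (g a) * Real.exp (-g t) :=
        mul_le_mul_of_nonneg_right (hanti ⟨le_rfl, ht.1.trans_lt ht.2⟩ ht ht.1) (Real.exp_nonneg _)
    _ = V a * Real.exp (g a - g t) := by rw [mul_assoc, ← Real.exp_add, sub_eq_add_neg]

theorem hasDerivAt_div_mul_div_sub_pow {T c t : ℝ} (hT : T ≠ 0) (ht : t ≠ c) {m : ℕ}
    (hm : m ≠ 0) : HasDerivAt (fun s => T / m * (T / (c - s)) ^ m) ((T / (c - t)) ^ (m + 1)) t := by
  have hct : c - t ≠ 0 := sub_ne_zero.2 ht.symm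
  have h : HasDerivAt (fun s => T / (c - s)) ((T / (c - t)) ^ 2 / T) t := by
    have h0 : HasDerivAt (fun s => T * (c - s)⁻¹) (T * (-(-1) / (c - t) ^ 2)) t :=
      (((hasDerivAt_id t).const_sub c).inv hct).const_mul T
    simp only [← div_eq_mul_inv] at h0
    refine h0.congr_deriv ?_
    field_simp
  refine ((h.pow m).const_mul (T / m)).congr_deriv ?_
  obtain ⟨m, rfl⟩ := Nat.exists_eq_add_one_of_ne_zero hm
  generalize T / (c - t) = x
  simp only [Nat.add_sub_cancel]
  field_simp
  ring

theorem tendsto_div_sub_nhdsLT_atTop {T : ℝ} (hT : 0 < T) (c : ℝ) :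
    Tendsto (fun s => T / (c - s)) (𝓝[<] c) atTop := by
  have h : Tendsto (fun s => c - s) (𝓝[<] c) (𝓝[>] 0) := by
    refine tendsto_nhdsWithin_iff.2
      ⟨?_, eventually_nhdsWithin_of_forall fun s hs => mem_Ioi.2 (sub_pos.2 hs)⟩
    exact ((continuous_const.sub continuous_id).tendsto' c 0 (sub_self c)).mono_left
      nhdsWithin_le_nhds
  simpa [div_eq_mul_inv] using (tendsto_inv_nhdsGT_zero.comp h).const_mul_atTop hT

theorem tendsto_mul_exp_neg_mul_sub {α : Type*} {l : Filter α} {f : α → ℝ}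
    (hf : Tendsto f l atTop) {k : ℝ} (hk : 0 < k) (C a : ℝ) :
    Tendsto (fun x => C * Real.exp (-k * (f x - a))) l (𝓝 0) := by
  have h : Tendsto (fun x => -k * (f x - a)) l atBot := by
    simpa [neg_mul, sub_eq_add_neg] using
      (tendsto_atTop_add_const_right l (-a) hf).const_mul_atTop hk
  simpa using (Real.tendsto_exp_atBot.comp h).const_mul C

namespace Matrix.IsHermitian

variable {ι : Type*} [Fintype ι] [DecidableEq ι] {A : Matrix ι ι ℝ}

theorem toEuclideanLin_eigenvectorBasis (hA : A.IsHermitian) (i : ι) :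
    toEuclideanLin A (hA.eigenvectorBasis i) = hA.eigenvalues i • hA.eigenvectorBasis i :=
  WithLp.ofLp_injective 2 (by simpa using hA.mulVec_eigenvectorBasis i)

theorem inner_toEuclideanLin_self (hA : A.IsHermitian) (x : EuclideanSpace ℝ ι) :
    ⟪x, toEuclideanLin A x⟫_ℝ = ∑ i, hA.eigenvalues i * ⟪hA.eigenvectorBasis i, x⟫_ℝ ^ 2 := by
  rw [← hA.eigenvectorBasis.sum_inner_mul_inner]
  refine Finset.sum_congr rfl fun i _ => ?_
  rw [← isSymmetric_toEuclideanLin_iff.mpr hA, toEuclideanLin_eigenvectorBasis,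
    real_inner_smul_left, real_inner_comm x]
  ring

theorem iInf_eigenvalues_mul_norm_sq_le (hA : A.IsHermitian) (x : EuclideanSpace ℝ ι) :
    (⨅ i, hA.eigenvalues i) * ‖x‖ ^ 2 ≤ ⟪x, toEuclideanLin A x⟫_ℝ := by
  rw [inner_toEuclideanLin_self, ← hA.eigenvectorBasis.sum_sq_norm_inner_right, Finset.mul_sum]
  simp only [Real.norm_eq_abs, sq_abs]
  gcongr with i
  exact ciInf_le (Finite.bddBelow_range _) i

theorem inner_toEuclideanLin_self_le (hA : A.IsHermitian) (x : EuclideanSpace ℝ ι) :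
    ⟪x, toEuclideanLin A x⟫_ℝ ≤ (⨆ i, hA.eigenvalues i) * ‖x‖ ^ 2 := by
  rw [inner_toEuclideanLin_self, ← hA.eigenvectorBasis.sum_sq_norm_inner_right, Finset.mul_sum]
  simp only [Real.norm_eq_abs, sq_abs]
  gcongr with i
  exact le_ciSup (Finite.bddAbove_range _) i

theorem iInf_eigenvalues_pos [Nonempty ι] (hA : A.IsHermitian) (hpos : A.PosDef) :
    0 < ⨅ i, hA.eigenvalues i := by
  obtain ⟨i, hi⟩ := exists_eq_ciInf_of_finite (f := hA.eigenvalues)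
  exact hi ▸ hpos.eigenvalues_pos i

theorem norm_le_sqrt_div_mul_norm_mul_exp (hA : A.IsHermitian) (hmin : 0 < ⨅ i, hA.eigenvalues i)
    {x y : EuclideanSpace ℝ ι} {d : ℝ}
    (h : ⟪x, toEuclideanLin A x⟫_ℝ ≤ ⟪y, toEuclideanLin A y⟫_ℝ * Real.exp d) :
    ‖x‖ ≤ √((⨆ i, hA.eigenvalues i) / ⨅ i, hA.eigenvalues i) * ‖y‖ * Real.exp (d / 2) := by
  have hsq :
      ‖x‖ ^ 2 ≤ (⨆ i, hA.eigenvalues i) / (⨅ i, hA.eigenvalues i) * ‖y‖ ^ 2 * Real.exp d := by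
    rw [div_mul_eq_mul_div, div_mul_eq_mul_div, le_div_iff₀ hmin]
    calc ‖x‖ ^ 2 * ⨅ i, hA.eigenvalues i ≤ ⟪x, toEuclideanLin A x⟫_ℝ := by
          rw [mul_comm]; exact hA.iInf_eigenvalues_mul_norm_sq_le x
      _ ≤ ⟪y, toEuclideanLin A y⟫_ℝ * Real.exp d := h
      _ ≤ (⨆ i, hA.eigenvalues i) * ‖y‖ ^ 2 * Real.exp d := by
          gcongr; exact hA.inner_toEuclideanLin_self_le y
  calc ‖x‖ = √(‖x‖ ^ 2) := (Real.sqrt_sq (norm_nonneg x)).symm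
    _ ≤ √((⨆ i, hA.eigenvalues i) / (⨅ i, hA.eigenvalues i) * ‖y‖ ^ 2 * Real.exp d) :=
        Real.sqrt_le_sqrt hsq
    _ = _ := by
        rw [Real.sqrt_mul' _ (Real.exp_nonneg d), Real.sqrt_mul' _ (sq_nonneg _),
          Real.sqrt_sq (norm_nonneg y), Real.exp_half]

theorem inner_toEuclideanLin_le_mul_exp (hA : A.IsHermitian) (hmax : 0 < ⨆ i, hA.eigenvalues i)
    {ζ : ℝ → EuclideanSpace ℝ ι} {V' w g : ℝ → ℝ} {a b : ℝ}
    (hV : ∀ t ∈ Ico a b, HasDerivAt (fun s => ⟪ζ s, toEuclideanLin A (ζ s)⟫_ℝ) (V' t) t)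
    (hV' : ∀ t ∈ Ico a b, V' t ≤ -w t * ‖ζ t‖ ^ 2) (hw : ∀ t ∈ Ico a b, 0 ≤ w t)
    (hg : ∀ t ∈ Ico a b, HasDerivAt g (w t / ⨆ i, hA.eigenvalues i) t)
    {t : ℝ} (ht : t ∈ Ico a b) :
    ⟪ζ t, toEuclideanLin A (ζ t)⟫_ℝ ≤ ⟪ζ a, toEuclideanLin A (ζ a)⟫_ℝ * Real.exp (g a - g t) := by
  refine le_mul_exp_sub_of_hasDerivAt hV hg (fun s hs => ?_) ht
  have hle := mul_le_mul_of_nonneg_left (hA.inner_toEuclideanLin_self_le (ζ s))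
    (div_nonneg (hw s hs) hmax.le)
  have hcancel : w s / (⨆ i, hA.eigenvalues i) * ((⨆ i, hA.eigenvalues i) * ‖ζ s‖ ^ 2) =
      w s * ‖ζ s‖ ^ 2 := by field_simp
  linarith [hV' s hs]

end Matrix.IsHermitian

theorem quadratic_lyapunov_decay_general (t₀ T : ℝ) (hT : 0 < T)
    (μ : ℝ → ℝ) (hμ : ∀ t, μ t = T / (T + t₀ - t))
    (tS : ℝ) (htS : tS ∈ Set.Ico t₀ (t₀ + T))
    (m : ℕ) (hm : 1 ≤ m) (ε₁ : ℝ) (hε₁ : 0 < ε₁)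
    (n : ℕ) (hn : 0 < n)
    (P : Matrix (Fin n) (Fin n) ℝ) (hP : P.IsHermitian) (hPpos : P.PosDef)
    (ζ : ℝ → EuclideanSpace ℝ (Fin n))
    (V' : ℝ → ℝ)
    (hderiv : ∀ t ∈ Set.Ico tS (t₀ + T),
      HasDerivAt (fun s => (inner ℝ (ζ s) ((Matrix.toEuclideanLin P) (ζ s)) : ℝ)) (V' t) t)
    (hbound : ∀ t ∈ Set.Ico tS (t₀ + T),
      V' t ≤ -ε₁ * μ t ^ (1 + m) * ‖ζ t‖ ^ 2) :
    (∀ t ∈ Set.Ico tS (t₀ + T),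
      ‖ζ t‖ ≤ Real.sqrt ((⨆ i, hP.eigenvalues i) / (⨅ i, hP.eigenvalues i)) * ‖ζ tS‖ *
        Real.exp (-(ε₁ * T / (2 * m * (⨆ i, hP.eigenvalues i))) * (μ t ^ m - μ tS ^ m))) ∧
    Tendsto ζ (nhdsWithin (t₀ + T) (Set.Iio (t₀ + T))) (nhds 0) := by
  obtain rfl : μ = fun t => T / (T + t₀ - t) := funext hμ
  have : Nonempty (Fin n) := ⟨⟨0, hn⟩⟩
  have hlmin := hP.iInf_eigenvalues_pos hPpos
  set lmin := ⨅ i, hP.eigenvalues i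
  set lmax := ⨆ i, hP.eigenvalues i
  have hlmax : 0 < lmax :=
    hlmin.trans_le (ciInf_le_ciSup (Finite.bddBelow_range _) (Finite.bddAbove_range _))
  have hlt : ∀ t ∈ Ico tS (t₀ + T), t < T + t₀ := fun t ht => by linarith [ht.2]
  have hVexp : ∀ t ∈ Ico tS (t₀ + T), ⟪ζ t, toEuclideanLin P (ζ t)⟫_ℝ ≤
      ⟪ζ tS, toEuclideanLin P (ζ tS)⟫_ℝ * Real.exp (ε₁ / lmax * (T / m * (T / (T + t₀ - tS)) ^ m)
        - ε₁ / lmax * (T / m * (T / (T + t₀ - t)) ^ m)) :=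
    fun t => hP.inner_toEuclideanLin_le_mul_exp hlmax hderiv
      (w := fun s => ε₁ * (T / (T + t₀ - s)) ^ (m + 1))
      (fun s hs => (hbound s hs).trans_eq (by rw [add_comm 1 m]; ring))
      (fun s hs => by have := hlt s hs; positivity) fun s hs =>
      ((hasDerivAt_div_mul_div_sub_pow hT.ne' (hlt s hs).ne (by omega)).const_mul _).congr_deriv
        (div_mul_eq_mul_div _ _ _)
  have hdecay : ∀ t ∈ Ico tS (t₀ + T), ‖ζ t‖ ≤ √(lmax / lmin) * ‖ζ tS‖ * Real.exp
      (-(ε₁ * T / (2 * m * lmax)) * ((T / (T + t₀ - t)) ^ m - (T / (T + t₀ - tS)) ^ m)) :=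
    fun t ht => (hP.norm_le_sqrt_div_mul_norm_mul_exp hlmin (hVexp t ht)).trans_eq
      (by congr 2; ring)
  have hμlim : Tendsto (fun t => T / (T + t₀ - t)) (𝓝[<] (t₀ + T)) atTop := by
    rw [add_comm t₀ T]; exact tendsto_div_sub_nhdsLT_atTop hT _
  have hrate := tendsto_mul_exp_neg_mul_sub ((tendsto_pow_atTop (by omega : m ≠ 0)).comp hμlim)
    (k := ε₁ * T / (2 * m * lmax)) (by positivity) (√(lmax / lmin) * ‖ζ tS‖)
    ((T / (T + t₀ - tS)) ^ m)
  refine ⟨hdecay, squeeze_zero_norm' ?_ hrate⟩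
  filter_upwards [Ioo_mem_nhdsLT htS.2] with t ht using hdecay t (Ioo_subset_Ico_self ht)

theorem quadratic_lyapunov_decay (t₀ T : ℝ) (ht₀ : 0 ≤ t₀) (hT : 0 < T)
    (μ : ℝ → ℝ) (hμ : ∀ t, μ t = T / (T + t₀ - t))
    (tS : ℝ) (htS : tS ∈ Set.Ico t₀ (t₀ + T))
    (m : ℕ) (hm : 1 ≤ m) (ε₁ : ℝ) (hε₁ : 0 < ε₁)
    (n : ℕ) (hn : 0 < n)
    (P : Matrix (Fin n) (Fin n) ℝ) (hP : P.IsHermitian) (hPpos : P.PosDef)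
    (ζ : ℝ → EuclideanSpace ℝ (Fin n))
    (V' : ℝ → ℝ)
    (hderiv : ∀ t ∈ Set.Ico tS (t₀ + T),
      HasDerivAt (fun s => (inner ℝ (ζ s) ((Matrix.toEuclideanLin P) (ζ s)) : ℝ)) (V' t) t)
    (hbound : ∀ t ∈ Set.Ico tS (t₀ + T),
      V' t ≤ -ε₁ * μ t ^ (1 + m) * ‖ζ t‖ ^ 2) :
    (∀ t ∈ Set.Ico tS (t₀ + T),
      ‖ζ t‖ ≤ Real.sqrt ((⨆ i, hP.eigenvalues i) / (⨅ i, hP.eigenvalues i)) * ‖ζ tS‖ *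
        Real.exp (-(ε₁ * T / (2 * m * (⨆ i, hP.eigenvalues i))) * (μ t ^ m - μ tS ^ m))) ∧
    Tendsto ζ (nhdsWithin (t₀ + T) (Set.Iio (t₀ + T))) (nhds 0) :=
  quadratic_lyapunov_decay_general t₀ T hT μ hμ tS htS m hm ε₁ hε₁ n hn P hP hPpos ζ V' hderiv
    hbound
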